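/- arXiv:2512.05925 — 2 statements merged into one kernel-verified Lean document; each statement's English description precedes it below -/
import Mathlib

section
/- There exists an injective function f : ℤ → ℤ with f(0) = 1, f(1) = 0, f(2) = 3, and f(3) = 2 such that, although the multiset {0, 2} is distinct from the multiset {1, 3}, the pooled multisets {0, f(0), 2, f(2)} and {1, f(1), 3, f(3)} are equal (both equal {0, 1, 2, 3}). Consequently, the readout map sending a multiset s of node features to the pooled multiset s + map f s is not injective even though f is injective. -/
theorem exists_injective_with_equal_pooled_multisets :
    ∃ f : ℤ → ℤ, Function.Injective f ∧
      f 0 = 1 ∧ f 1 = 0 ∧ f 2 = 3 ∧ f 3 = 2 ∧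
      ({0, 2} : Multiset ℤ) ≠ ({1, 3} : Multiset ℤ) ∧
      ({0, 2} : Multiset ℤ) + Multiset.map f ({0, 2} : Multiset ℤ) =
        ({1, 3} : Multiset ℤ) + Multiset.map f ({1, 3} : Multiset ℤ) ∧
      ({0, 2} : Multiset ℤ) + Multiset.map f ({0, 2} : Multiset ℤ) =
        ({0, 1, 2, 3} : Multiset ℤ) ∧
      ¬ Function.Injective (fun s : Multiset ℤ => s + Multiset.map f s) := by
  use fun x => if Even x then x + 1 else x - 1
  have hinj : Function.Injective (fun x : ℤ => if Even x then x + 1 else x - 1) := by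
    intro a b h
    simp only at h
    by_cases ha : Even a <;> by_cases hb : Even b <;> simp [ha, hb] at h <;> try omega
    · exfalso; obtain ⟨k, hk⟩ := ha; rcases Int.even_or_odd b with h2 | h2
      · exact hb h2
      · obtain ⟨m, hm⟩ := h2; omega
    · exfalso; obtain ⟨k, hk⟩ := hb; rcases Int.even_or_odd a with h2 | h2
      · exact ha h2
      · obtain ⟨m, hm⟩ := h2; omega
  have hmap1 : Multiset.map (fun x : ℤ => if Even x then x + 1 else x - 1) {0, 2} = {1, 3} := by
    simp [Multiset.map_cons, Int.even_iff]
  have hmap2 : Multiset.map (fun x : ℤ => if Even x then x + 1 else x - 1) {1, 3} = {0, 2} := by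
    norm_num [Multiset.map_cons, Int.even_iff]
  have hne : ({0, 2} : Multiset ℤ) ≠ ({1, 3} : Multiset ℤ) := by
    intro h
    have h0 : (0:ℤ) ∈ ({1, 3} : Multiset ℤ) := h ▸ (by simp)
    simp at h0
  have heq : ({0, 2} : Multiset ℤ) + {1, 3} = ({1, 3} : Multiset ℤ) + {0, 2} := add_comm _ _
  refine ⟨hinj, by norm_num, by norm_num [Int.even_iff], by norm_num [Int.even_iff],
    by norm_num [Int.even_iff], hne, by rw [hmap1, hmap2]; exact heq, ?_, ?_⟩
  · rw [hmap1]
    show ((0:ℤ) ::ₘ 2 ::ₘ 0) + (1 ::ₘ 3 ::ₘ 0) = _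
    simp [Multiset.insert_eq_cons]
    exact Multiset.cons_swap _ _ _
  · intro h
    exact hne (h (by simp only [hmap1, hmap2]; exact heq))
end

section
/- There exist real 2×2 matrices A and B such that A is positive semidefinite and B is positive semidefinite, but the product A · B is not positive semidefinite. -/
/-!
Positive semidefiniteness includes self-adjointness, and a product of self-adjoint matrices is
self-adjoint only when the factors commute. The rank-one matrices `u uᵀ` for `u = (1, 0)` and
`u = (1, 1)` are positive semidefinite but do not commute.
-/

open Matrix

theorem Matrix.PosSemidef.commute_of_posSemidef_mul {n R : Type*} [Fintype n]
    [Ring R] [PartialOrder R] [StarRing R] {A B : Matrix n n R}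
    (hA : A.PosSemidef) (hB : B.PosSemidef) (hAB : (A * B).PosSemidef) : Commute A B :=
  (hA.isHermitian.commute_iff hB.isHermitian).2 hAB.isHermitian

theorem exists_posSemidef_product_not_posSemidef :
    ∃ A B : Matrix (Fin 2) (Fin 2) ℝ,
      A.PosSemidef ∧ B.PosSemidef ∧ ¬ (A * B).PosSemidef := by
  have hA : (vecMulVec ![1, 0] ![1, 0] : Matrix (Fin 2) (Fin 2) ℝ).PosSemidef :=
    posSemidef_vecMulVec_self_star _
  have hB : (vecMulVec ![1, 1] ![1, 1] : Matrix (Fin 2) (Fin 2) ℝ).PosSemidef :=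
    posSemidef_vecMulVec_self_star _
  have not_commute : ¬ Commute (vecMulVec ![1, 0] ![1, 0] : Matrix (Fin 2) (Fin 2) ℝ)
      (vecMulVec ![1, 1] ![1, 1]) := fun h => by
    have h01 := congrFun (congrFun h.eq 0) 1
    simp [vecMulVec, mul_apply, Fin.sum_univ_two] at h01
  exact ⟨_, _, hA, hB, fun hAB => not_commute (hA.commute_of_posSemidef_mul hB hAB)⟩
end
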